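/- All zeros of P_n in ℂ are simple, where P_n is the n-th monic L^p(μ₀)-extremal polynomial. -/

import Mathlib

open MeasureTheory Polynomial Set

/-- The (topological) support of a Borel measure on `ℝ`. -/
def msupport (μ : Measure ℝ) : Set ℝ :=
  {x : ℝ | ∀ U : Set ℝ, IsOpen U → x ∈ U → 0 < μ U}

/-- The `L^p(μ)` norm `‖f‖_{0,p} = (∫ |f|^p dμ)^(1/p)` of a polynomial. -/
noncomputable def lpNorm (p : ℝ) (μ : Measure ℝ) (f : Polynomial ℝ) : ℝ :=
  (∫ x, |f.eval x| ^ p ∂μ) ^ (1 / p)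

/-!
If `P = q² T` with `q` non-constant, then `P + t T = (q² + t) T` is monic of degree `n` for every
real `t`, so `t ↦ ∫ |(q² + t) T|^p dμ` is minimal at `t = 0`. Its derivative there,
`p ∫ |P|^(p-2) q² T² dμ`, must vanish; as the integrand is nonnegative and vanishes only at the
zeros of `P`, the infinite support of `μ` would lie in the finite zero set of `P`. Hence `P` is
squarefree, and over `ℝ` (a perfect field) it is then separable, also after extending scalars
to `ℂ`.
-/

lemma msupport_eq_support (μ : Measure ℝ) : msupport μ = μ.support := by
  rw [Measure.support_eq_forall_isOpen]
  ext x
  exact forall_congr' fun _ => imp.swap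

lemma Continuous.integrable_of_isCompact_msupport {μ : Measure ℝ} [IsFiniteMeasureOnCompacts μ]
    (hμ : IsCompact (msupport μ)) {g : ℝ → ℝ} (hg : Continuous g) : Integrable g μ := by
  rw [msupport_eq_support] at hμ
  have hg' : IntegrableOn g μ.support μ := hg.continuousOn.integrableOn_compact hμ
  rwa [IntegrableOn,
    Measure.restrict_eq_self_of_ae_mem (s := μ.support) Measure.support_mem_ae] at hg'

lemma abs_rpow_sub_two_mul_abs {p : ℝ} (hp : p ≠ 1) (u : ℝ) :
    |u| ^ (p - 2) * |u| = |u| ^ (p - 1) := by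
  rw [← Real.rpow_add_one' (abs_nonneg u) (by contrapose! hp; linarith)]
  ring_nf

/-- `u ↦ |u|^(p-2) u` is, up to the factor `p`, the derivative of the `C¹` map `u ↦ |u|^p`. -/
lemma continuous_abs_rpow_sub_two_mul_self {p : ℝ} (hp : 1 < p) :
    Continuous fun u : ℝ => |u| ^ (p - 2) * u := by
  have hderiv : deriv (fun u : ℝ => ‖u‖ ^ p) = fun u => p * (|u| ^ (p - 2) * u) :=
    funext fun u => by simpa [mul_assoc] using (hasDerivAt_abs_rpow u hp).deriv
  have hcont := (contDiff_norm_rpow (E := ℝ) hp).continuous_deriv le_rfl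
  rw [hderiv] at hcont
  simpa [← mul_assoc, inv_mul_cancel₀ (by linarith : p ≠ 0)] using hcont.const_mul p⁻¹

section Variation

variable {p : ℝ} {μ : Measure ℝ} [IsFiniteMeasureOnCompacts μ] {f g : ℝ → ℝ}

lemma norm_deriv_abs_add_mul_rpow_le (hp : 1 < p) {t : ℝ} (ht : |t| ≤ 1) (a b : ℝ) :
    ‖p * (|a + t * b| ^ (p - 2) * (a + t * b) * b)‖ ≤ p * ((|a| + |b|) ^ (p - 1) * |b|) := by
  have hp0 : 0 ≤ p := by linarith
  have htb : |t * b| ≤ |b| := by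
    rw [abs_mul]
    exact mul_le_of_le_one_left (abs_nonneg b) ht
  have hle : |a + t * b| ≤ |a| + |b| := (abs_add_le _ _).trans (by linarith)
  rw [Real.norm_eq_abs, abs_mul, abs_mul, abs_mul, abs_of_nonneg hp0,
    abs_of_nonneg (Real.rpow_nonneg (abs_nonneg _) _), abs_rpow_sub_two_mul_abs hp.ne']
  gcongr

lemma hasDerivAt_integral_abs_add_mul_rpow (hp : 1 < p) (hμ : IsCompact (msupport μ))
    (hf : Continuous f) (hg : Continuous g) :
    HasDerivAt (fun t => ∫ x, |f x + t * g x| ^ p ∂μ)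
      (p * ∫ x, |f x| ^ (p - 2) * f x * g x ∂μ) 0 := by
  have hφ := continuous_abs_rpow_sub_two_mul_self hp
  have hcont : ∀ t : ℝ, Continuous fun x => |f x + t * g x| ^ p := fun t =>
    ((hf.add (hg.const_mul t)).abs).rpow_const fun _ => Or.inr (by linarith)
  have hderiv : ∀ x t, HasDerivAt (fun t => |f x + t * g x| ^ p)
      (p * (|f x + t * g x| ^ (p - 2) * (f x + t * g x) * g x)) t := fun x t => by
    have h := (hasDerivAt_abs_rpow (f x + t * g x) hp).comp t
      (((hasDerivAt_id t).mul_const (g x)).const_add (f x))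
    simp only [Function.comp_def, id] at h
    exact h.congr_deriv (by ring)
  have hbound : ∀ x, ∀ t ∈ Metric.ball (0 : ℝ) 1,
      ‖p * (|f x + t * g x| ^ (p - 2) * (f x + t * g x) * g x)‖
        ≤ p * ((|f x| + |g x|) ^ (p - 1) * |g x|) := fun x t ht =>
    norm_deriv_abs_add_mul_rpow_le hp (by simpa using (Metric.mem_ball.mp ht).le) _ _
  have hbound_cont : Continuous fun x => p * ((|f x| + |g x|) ^ (p - 1) * |g x|) :=
    continuous_const.mul
      (((hf.abs.add hg.abs).rpow_const fun _ => Or.inr (by linarith)).mul hg.abs)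
  have hF'_cont : Continuous fun x => p * (|f x| ^ (p - 2) * f x * g x) :=
    continuous_const.mul ((hφ.comp hf).mul hg)
  have key := hasDerivAt_integral_of_dominated_loc_of_deriv_le (μ := μ) (x₀ := 0)
    (Metric.ball_mem_nhds 0 one_pos)
    (Filter.Eventually.of_forall fun t => (hcont t).aestronglyMeasurable)
    ((hcont 0).integrable_of_isCompact_msupport hμ)
    (by simpa using hF'_cont.aestronglyMeasurable)
    (ae_of_all _ hbound) (hbound_cont.integrable_of_isCompact_msupport hμ)
    (ae_of_all _ fun x t _ => hderiv x t)
  simpa [integral_const_mul] using key.2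

end Variation

def IsLpExtremal (p : ℝ) (μ : Measure ℝ) (P : ℝ[X]) : Prop :=
  P.Monic ∧
    ∀ Q : ℝ[X], Q.Monic → Q.natDegree = P.natDegree → lpNorm p μ P ≤ lpNorm p μ Q

lemma lpNorm_le_lpNorm_iff {p : ℝ} (hp : 0 < p) (μ : Measure ℝ) (f g : ℝ[X]) :
    lpNorm p μ f ≤ lpNorm p μ g ↔
      ∫ x, |f.eval x| ^ p ∂μ ≤ ∫ x, |g.eval x| ^ p ∂μ :=
  Real.rpow_le_rpow_iff (integral_nonneg fun _ => by positivity)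
    (integral_nonneg fun _ => by positivity) (one_div_pos.mpr hp)

namespace IsLpExtremal

variable {p : ℝ} {μ : Measure ℝ} [IsFiniteMeasureOnCompacts μ] {P : ℝ[X]}

lemma integral_abs_rpow_sub_two_mul_mul_eq_zero (hP : IsLpExtremal p μ P) (hp : 1 < p)
    (hμ : IsCompact (msupport μ)) {T : ℝ[X]} (hT : T.degree < P.degree) :
    ∫ x, |P.eval x| ^ (p - 2) * P.eval x * T.eval x ∂μ = 0 := by
  have hmin : IsLocalMin (fun t => ∫ x, |P.eval x + t * T.eval x| ^ p ∂μ) 0 :=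
    Filter.Eventually.of_forall fun t => by
      have hlt : (t • T).degree < P.degree := (degree_smul_le t T).trans_lt hT
      have hQ := hP.2 (P + t • T) (hP.1.add_of_left hlt) (natDegree_add_eq_left_of_degree_lt hlt)
      simpa [lpNorm_le_lpNorm_iff (by linarith : 0 < p)] using hQ
  have hderiv := hmin.hasDerivAt_eq_zero
    (hasDerivAt_integral_abs_add_mul_rpow hp hμ P.continuous T.continuous)
  exact (mul_eq_zero.mp hderiv).resolve_left (by linarith)

lemma squarefree (hP : IsLpExtremal p μ P) (hp : 1 < p) (hμc : IsCompact (msupport μ))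
    (hμinf : (msupport μ).Infinite) : Squarefree P := by
  rintro q ⟨T, hPT⟩
  by_contra hq
  have hP0 : P ≠ 0 := hP.1.ne_zero
  have hqT0 : q * T ≠ 0 := by rintro h; exact hP0 (by rw [hPT, mul_assoc, h, mul_zero])
  have hT : T.degree < P.degree := by
    have hq_pos : 0 < q.natDegree :=
      natDegree_pos_of_not_isUnit_of_dvd_monic hP.1 hq ⟨q * T, by rw [hPT, mul_assoc]⟩
    have hdeg : P.natDegree = q.natDegree + (q.natDegree + T.natDegree) := by
      rw [hPT, mul_assoc, natDegree_mul (left_ne_zero_of_mul hqT0) hqT0,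
        natDegree_mul (left_ne_zero_of_mul hqT0) (right_ne_zero_of_mul hqT0)]
    exact degree_lt_degree (by omega)
  set I : ℝ → ℝ := fun x => |P.eval x| ^ (p - 2) * P.eval x * T.eval x
  have hI : ∀ x, I x = |P.eval x| ^ (p - 2) * (q.eval x * T.eval x) ^ 2 := fun x => by
    simp only [I, hPT, eval_mul]; ring
  have hI_nonneg : 0 ≤ I := fun x => by rw [hI]; positivity
  have hI_int : Integrable I μ :=
    (((continuous_abs_rpow_sub_two_mul_self hp).comp P.continuous).mul
      T.continuous).integrable_of_isCompact_msupport hμc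
  have hI_zero : ∀ x, I x = 0 → P.IsRoot x := fun x hx => by
    rw [hI] at hx
    rcases mul_eq_zero.mp hx with h | h
    · exact abs_eq_zero.mp ((Real.rpow_eq_zero_iff_of_nonneg (abs_nonneg _)).mp h).1
    · simp [IsRoot, hPT, mul_assoc, pow_eq_zero_iff two_ne_zero |>.mp h]
  have hae : ∀ᵐ x ∂μ, P.IsRoot x :=
    ((integral_eq_zero_iff_of_nonneg hI_nonneg hI_int).mp
      (hP.integral_abs_rpow_sub_two_mul_mul_eq_zero hp hμc hT)).mono hI_zero
  have hsub : msupport μ ⊆ {x | P.IsRoot x} := by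
    rw [msupport_eq_support]
    exact Measure.support_subset_of_isClosed (isClosed_eq P.continuous continuous_const) hae
  exact hμinf ((finite_setOfPred_isRoot hP0).subset hsub)

end IsLpExtremal

theorem stmt_12
    (p : ℝ) (hp : 1 < p)
    (μ0 : Measure ℝ) [IsFiniteMeasure μ0]
    (h0c : IsCompact (msupport μ0)) (h0inf : (msupport μ0).Infinite)
    (n : ℕ) (P : Polynomial ℝ) (hmonic : P.Monic) (hdeg : P.natDegree = n)
    (hextremal : ∀ Q : Polynomial ℝ, Q.Monic → Q.natDegree = n →
      lpNorm p μ0 P ≤ lpNorm p μ0 Q) :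
    ∀ z : ℂ, (P.map (algebraMap ℝ ℂ)).IsRoot z →
      rootMultiplicity z (P.map (algebraMap ℝ ℂ)) = 1 := by
  intro z hz
  subst hdeg
  have hsq : Squarefree P := IsLpExtremal.squarefree ⟨hmonic, hextremal⟩ hp h0c h0inf
  have hsep : (P.map (algebraMap ℝ ℂ)).Separable :=
    (PerfectField.separable_iff_squarefree.mpr hsq).map
  exact le_antisymm (rootMultiplicity_le_one_of_separable hsep z)
    ((rootMultiplicity_pos (hmonic.map _).ne_zero).mpr hz)
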